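/- arXiv:1708.01194 — 2 statements merged into one kernel-verified Lean document; each statement's English description precedes it below -/
import Mathlib

section
/- The generalized Fibonacci group F(2,4), defined by the presentation ⟨x₁, x₂, x₃, x₄ ∣ x₁x₂x₃⁻¹, x₂x₃x₄⁻¹, x₃x₄x₁⁻¹, x₄x₁x₂⁻¹⟩, is cyclic of order 5. -/
open Fin.NatCast

/-- The relators of the generalized Fibonacci group `F(r,n)`:
for each `i : Fin n` the word `x_i x_{i+1} ⋯ x_{i+r-1} x_{i+r}⁻¹` (subscripts mod `n`). -/
def fibRels (r n : ℕ) [NeZero n] : Set (FreeGroup (Fin n)) :=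
  Set.range fun i : Fin n =>
    ((List.range r).map fun j => FreeGroup.of (i + (j : Fin n))).prod *
      (FreeGroup.of (i + (r : Fin n)))⁻¹

/-!
Write `a = x₀`, `b = x₁`. The relators give `x₂ = ab` and `x₃ = bab`; then `x₃x₀ = x₁` forces
`aba = 1`, i.e. `b = a⁻²`, and `x₂x₃ = x₀` becomes `a⁻⁴ = a`, so `a⁵ = 1`. Hence `F(2,4)` is
generated by `a` and has order dividing `5`, and the assignment `xᵢ ↦ 1, 3, 4, 2 (mod 5)`
satisfies the relators, so `a ≠ 1` and `F(2,4)` has prime order `5`.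
-/

theorem fibRels_prod_map_of (r n : ℕ) [NeZero n] (i : Fin n) :
    ((List.range r).map fun j =>
        (PresentedGroup.of (i + (j : Fin n)) : PresentedGroup (fibRels r n))).prod =
      PresentedGroup.of (i + (r : Fin n)) := by
  have h := PresentedGroup.mk_eq_mk_of_mul_inv_mem (rels := fibRels r n) ⟨i, rfl⟩
  rwa [map_list_prod, List.map_map] at h

namespace FibonacciGroup24

open PresentedGroup

local notation "x" => (of : Fin 4 → PresentedGroup (fibRels 2 4))

theorem of_mul_of_succ (i : Fin 4) : x i * x (i + 1) = x (i + 2) := by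
  simpa [List.range_succ] using fibRels_prod_map_of 2 4 i

theorem of_two : x 2 = x 0 * x 1 := (of_mul_of_succ 0).symm

theorem of_three : x 3 = x 1 * (x 0 * x 1) := by
  rw [← of_two]
  exact (of_mul_of_succ 1).symm

theorem of_one : x 1 = (x 0 ^ 2)⁻¹ := by
  have h : x 1 * (x 0 * x 1) * x 0 = x 1 := by
    rw [← of_three]
    exact of_mul_of_succ 3
  rw [mul_assoc, mul_assoc, mul_eq_left, ← mul_assoc] at h
  rw [pow_two, mul_inv_rev, eq_inv_mul_iff_mul_eq, ← eq_inv_iff_mul_eq_one.mpr h]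

theorem of_zero_pow_five : x 0 ^ 5 = 1 := by
  have h : x 2 * x 3 = x 0 := of_mul_of_succ 2
  rw [of_three, of_two, of_one] at h
  group at h
  calc x 0 ^ 5 = x 0 ^ (4 : ℤ) * x 0 := by group
    _ = x 0 ^ (4 : ℤ) * x 0 ^ (-4 : ℤ) := by rw [h]
    _ = 1 := by group

theorem zpowers_of_zero : Subgroup.zpowers (x 0) = ⊤ := by
  rw [eq_top_iff, ← closure_range_of, Subgroup.closure_le]
  have h0 : x 0 ∈ Subgroup.zpowers (x 0) := Subgroup.mem_zpowers _
  have h1 : x 1 ∈ Subgroup.zpowers (x 0) := of_one ▸ inv_mem (pow_mem h0 2)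
  rintro _ ⟨i, rfl⟩
  fin_cases i
  exacts [h0, h1, of_two ▸ mul_mem h0 h1, of_three ▸ mul_mem h1 (mul_mem h0 h1)]

/-- `x₀ ↦ 1`, hence `x₁ = x₀⁻² ↦ 3`, `x₂ = x₀⁻¹ ↦ 4`, `x₃ = x₀⁻³ ↦ 2`. -/
def toZMod : PresentedGroup (fibRels 2 4) →* Multiplicative (ZMod 5) :=
  toGroup (f := fun i => Multiplicative.ofAdd (![1, 3, 4, 2] i)) <| by
    rintro _ ⟨i, rfl⟩
    fin_cases i <;> decide

theorem of_zero_ne_one : x 0 ≠ 1 := fun h => by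
  have h' := congrArg toZMod h
  rw [toZMod, toGroup.of, map_one] at h'
  exact absurd h' (by decide)

theorem orderOf_of_zero : orderOf (x 0) = 5 :=
  have : Fact (Nat.Prime 5) := ⟨by norm_num⟩
  orderOf_eq_prime of_zero_pow_five of_zero_ne_one

theorem card_eq_five : Nat.card (PresentedGroup (fibRels 2 4)) = 5 := by
  rw [← orderOf_eq_card_of_zpowers_eq_top zpowers_of_zero, orderOf_of_zero]

end FibonacciGroup24

/-- `F(2,4)` is cyclic of order 5. -/
theorem F_2_4_cyclic5 :
    Nonempty (PresentedGroup (fibRels 2 4) ≃* Multiplicative (ZMod 5)) :=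
  have : Fact (Nat.Prime 5) := ⟨by norm_num⟩
  ⟨mulEquivOfPrimeCardEq FibonacciGroup24.card_eq_five (by simp)⟩
end

section
/- The generalized Fibonacci group F(3,2), defined by the presentation ⟨x₁, x₂ ∣ x₁x₂x₁x₂⁻¹, x₂x₁x₂x₁⁻¹⟩, is isomorphic to the quaternion group Q₈ of order 8. -/
/-!
The two relators of `F(3,2)` read `xyx = y` and `yxy = x`. Multiplying them gives `x² = y²`, and
`xyx = y` says that conjugation by `y` inverts `x`; since `y` commutes with `y² = x²`, this forces
`x⁴ = 1`. These are the defining relations of `Q₈ = ⟨a, b ∣ a⁴, a² = b², b⁻¹ab = a⁻¹⟩`, so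
`a ↦ x, b ↦ y` defines a homomorphism `Q₈ → F(3,2)`, inverse to `x ↦ a, y ↦ b`.
-/

open Fin.NatCast

theorem PresentedGroup.fibRels_prod_of {r n : ℕ} [NeZero n] (i : Fin n) :
    ((List.range r).map fun j => PresentedGroup.of (rels := fibRels r n) (i + (j : Fin n))).prod =
      PresentedGroup.of (i + (r : Fin n)) := by
  have h := PresentedGroup.one_of_mem (rels := fibRels r n) ⟨i, rfl⟩
  rw [map_mul, map_inv, map_list_prod, List.map_map, mul_inv_eq_one] at h
  exact h

theorem fibRels_lift_eq_one_iff {r n : ℕ} [NeZero n] {G : Type*} [Group G] (f : Fin n → G) :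
    (∀ w ∈ fibRels r n, FreeGroup.lift f w = 1) ↔
      ∀ i : Fin n, ((List.range r).map fun j => f (i + (j : Fin n))).prod = f (i + (r : Fin n)) := by
  simp only [fibRels, Set.forall_mem_range, map_mul, map_inv, map_list_prod, List.map_map,
    mul_inv_eq_one, Function.comp_def, FreeGroup.lift_apply_of]

section ZModPow

variable {G : Type*} [Group G] {x : G} {m : ℕ} [NeZero m]

theorem pow_val_add_of_pow_eq_one (hx : x ^ m = 1) (i j : ZMod m) :
    x ^ (i + j).val = x ^ i.val * x ^ j.val := by
  rw [ZMod.val_add, ← pow_eq_pow_mod _ hx, pow_add]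

theorem pow_val_sub_of_pow_eq_one (hx : x ^ m = 1) (i j : ZMod m) :
    x ^ (j - i).val = (x ^ i.val)⁻¹ * x ^ j.val := by
  rw [eq_inv_mul_iff_mul_eq, ← pow_val_add_of_pow_eq_one hx, add_sub_cancel]

end ZModPow

namespace QuaternionGroup

section lift

variable {n : ℕ} {G : Type*} [Group G] {x y : G}

theorem pow_mul_eq_mul_inv_pow (hxy : x * y * x = y) (k : ℕ) : x ^ k * y = y * (x ^ k)⁻¹ := by
  have h : SemiconjBy y x⁻¹ x := (eq_mul_inv_of_mul_eq hxy).symm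
  simpa [inv_pow] using (h.pow_right k).eq.symm

theorem pow_two_mul_eq_one (hxy : x * y * x = y) (hy : y ^ 2 = x ^ n) : x ^ (2 * n) = 1 := by
  -- `x ^ n = y ^ 2` commutes with `y`, while conjugation by `y` inverts it.
  have hcomm : x ^ n * y = y * x ^ n := by rw [← hy, ← pow_succ, ← pow_succ']
  have hinv : (x ^ n)⁻¹ = x ^ n :=
    mul_left_cancel ((pow_mul_eq_mul_inv_pow hxy n).symm.trans hcomm)
  calc x ^ (2 * n) = (x ^ n)⁻¹ * x ^ n := by rw [hinv, two_mul, pow_add]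
    _ = 1 := inv_mul_cancel _

variable [NeZero n] (hxy : x * y * x = y) (hy : y ^ 2 = x ^ n)

def lift : QuaternionGroup n →* G where
  toFun
    | a i => x ^ i.val
    | xa i => y * x ^ i.val
  map_one' := by
    show x ^ (0 : ZMod (2 * n)).val = 1
    rw [ZMod.val_zero, pow_zero]
  map_mul' := by
    have hx := pow_two_mul_eq_one hxy hy
    rintro (i | i) (j | j)
    · exact pow_val_add_of_pow_eq_one hx i j
    · show y * x ^ (j - i).val = x ^ i.val * (y * x ^ j.val)
      rw [pow_val_sub_of_pow_eq_one hx, ← mul_assoc, ← mul_assoc, pow_mul_eq_mul_inv_pow hxy]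
    · show y * x ^ (i + j).val = y * x ^ i.val * x ^ j.val
      rw [pow_val_add_of_pow_eq_one hx, mul_assoc]
    · show x ^ ((n : ZMod (2 * n)) + j - i).val = y * x ^ i.val * (y * x ^ j.val)
      have hn : (n : ZMod (2 * n)).val = n := ZMod.val_cast_of_lt (by linarith [NeZero.pos n])
      calc x ^ ((n : ZMod (2 * n)) + j - i).val = x ^ n * ((x ^ i.val)⁻¹ * x ^ j.val) := by
            rw [add_sub_assoc, pow_val_add_of_pow_eq_one hx, pow_val_sub_of_pow_eq_one hx, hn]
        _ = y * (x ^ i.val * y) * x ^ j.val := by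
            rw [pow_mul_eq_mul_inv_pow hxy, ← hy, sq]; group
        _ = y * x ^ i.val * (y * x ^ j.val) := by simp only [mul_assoc]

@[simp] theorem lift_a (i : ZMod (2 * n)) : lift hxy hy (a i) = x ^ i.val := rfl

@[simp] theorem lift_xa (i : ZMod (2 * n)) : lift hxy hy (xa i) = y * x ^ i.val := rfl

theorem comp_lift {H : Type*} [Group H] (f : G →* H) :
    f.comp (lift hxy hy) =
      lift (x := f x) (y := f y) (by rw [← map_mul, ← map_mul, hxy])
        (by rw [← map_pow, ← map_pow, hy]) := by
  ext (i | i) <;> simp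

end lift

theorem lift_a_one_xa_zero {n : ℕ} [NeZero n] :
    lift (x := (a 1 : QuaternionGroup n)) (y := xa 0) (by simp [a_mul_xa, xa_mul_a])
      (by rw [xa_sq, a_one_pow]) = MonoidHom.id _ := by
  ext (i | i) <;> simp [a_one_pow, xa_mul_a]

end QuaternionGroup

namespace FibonacciGroup32

open PresentedGroup QuaternionGroup

local notation "F₃₂" => PresentedGroup (fibRels 3 2)

theorem of_zero_mul_of_one_mul_of_zero : (of 0 * of 1 * of 0 : F₃₂) = of 1 := by
  simpa [List.range_succ, mul_assoc] using fibRels_prod_of (r := 3) (n := 2) 0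

theorem of_one_mul_of_zero_mul_of_one : (of 1 * of 0 * of 1 : F₃₂) = of 0 := by
  simpa [List.range_succ, mul_assoc] using fibRels_prod_of (r := 3) (n := 2) 1

theorem of_one_sq : (of 1 ^ 2 : F₃₂) = of 0 ^ 2 := by
  have h : (of 0 * (of 1 * of 0 * of 1) : F₃₂) = of 0 * of 1 * of 0 * of 1 := by group
  rw [of_one_mul_of_zero_mul_of_one, of_zero_mul_of_one_mul_of_zero] at h
  rw [sq, sq, h]

def toQuaternion : F₃₂ →* QuaternionGroup 2 :=
  toGroup (f := ![a 1, xa 0]) ((fibRels_lift_eq_one_iff _).2 (by decide))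

def ofQuaternion : QuaternionGroup 2 →* F₃₂ :=
  lift of_zero_mul_of_one_mul_of_zero of_one_sq

theorem ofQuaternion_comp_toQuaternion : ofQuaternion.comp toQuaternion = MonoidHom.id F₃₂ := by
  refine PresentedGroup.ext fun i => ?_
  have h1 : (1 : ZMod (2 * 2)).val = 1 := rfl
  fin_cases i <;> simp [toQuaternion, ofQuaternion, h1]

theorem toQuaternion_comp_ofQuaternion :
    toQuaternion.comp ofQuaternion = MonoidHom.id (QuaternionGroup 2) := by
  rw [ofQuaternion, comp_lift]
  convert lift_a_one_xa_zero <;> simp [toQuaternion]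

end FibonacciGroup32

/-- `F(3,2)` is isomorphic to the quaternion group `Q₈` of order 8. -/
theorem F_3_2_isQ8 : Nonempty (PresentedGroup (fibRels 3 2) ≃* QuaternionGroup 2) :=
  ⟨FibonacciGroup32.toQuaternion.toMulEquiv _ FibonacciGroup32.ofQuaternion_comp_toQuaternion
    FibonacciGroup32.toQuaternion_comp_ofQuaternion⟩
end
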